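/- (Rate with one nonsmooth term, regime p3 with L2 = ∞.) Let f1 ∈ F_{μ1,L1} with 0 < L1 < ∞ and f2 ∈ F_{μ2,∞}, with μ1 > −μ2 > 0. Let F := f1 − f2, let N ≥ 1, and let x⁰, …, x^N be a DCA sequence with subgradients g1^k ∈ ∂f1(x^k), g2^k ∈ ∂f2(x^k). Then (1/2)·min_{0 ≤ k ≤ N} ‖g1^k − g2^k‖² ≤ (F(x⁰) − F(x^N)) / (p·N), where p = (1/L1)·(1/μ1 + 1/μ2) / (1/μ1 + 1/μ2 − 1/L1). -/

import Mathlib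

/-!
Each DCA step decreases `F = f₁ - f₂` by at least `(p/2)‖g₁ᵏ - g₂ᵏ‖²`, where
`p = (μ₁ + μ₂) / Δ` and `Δ = L₁(μ₁ + μ₂) - μ₁μ₂`. To see this, evaluate at the point
`z = xᵏ - p (g₁ᵏ - g₂ᵏ)` both the subgradient inequality of `g₂ᵏ = g₁ᵏ⁺¹ ∈ ∂f₁(xᵏ⁺¹)` and the
quadratic upper bound `f₁ z ≤ f₁ xᵏ + ⟪g₁ᵏ, z - xᵏ⟫ + (L₁/2)‖z - xᵏ‖²`, and add the
subgradient inequality of `g₂ᵏ ∈ ∂f₂(xᵏ)` at `xᵏ⁺¹`: the slack is the square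
`((μ₁ + μ₂)/2)‖xᵏ⁺¹ - xᵏ + (μ₁/Δ)(g₁ᵏ - g₂ᵏ)‖²`. The upper bound holds for every subgradient
because `(L₁/2)‖·‖² - f₁` is convex and is majorized at `xᵏ` by an affine function plus a
quadratic, so the affine part is a supporting hyperplane. Summing the `N` decreases telescopes.
-/

open RealInnerProductSpace

variable {H : Type*} [NormedAddCommGroup H] [InnerProductSpace ℝ H]

/-- `f` has lower curvature `μ`, i.e. `f - (μ/2)‖·‖²` is convex. -/
def HasLowerCurvature (μ : ℝ) (f : H → ℝ) : Prop :=
  ConvexOn ℝ Set.univ fun x => f x - μ / 2 * ‖x‖ ^ 2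

/-- `f` has upper curvature `L`, i.e. `(L/2)‖·‖² - f` is convex. -/
def HasUpperCurvature (L : ℝ) (f : H → ℝ) : Prop :=
  ConvexOn ℝ Set.univ fun x => L / 2 * ‖x‖ ^ 2 - f x

/-- `g` is a subgradient of `f` (of lower curvature `μ`) at `x`. -/
def IsSubgradient (μ : ℝ) (f : H → ℝ) (x g : H) : Prop :=
  ∀ y, f y ≥ f x + ⟪g, y - x⟫ + μ / 2 * ‖y - x‖ ^ 2

open Filter Topology

lemma ConvexOn.add_inner_le_of_le_add_inner_add_sq {h : H → ℝ} (hh : ConvexOn ℝ Set.univ h)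
    {x a : H} {C : ℝ} (hmaj : ∀ y, h y ≤ h x + ⟪a, y - x⟫ + C * ‖y - x‖ ^ 2) (z : H) :
    h x + ⟪a, z - x⟫ ≤ h z := by
  set d := z - x
  have happrox : ∀ t : ℝ, 0 < t → h x + ⟪a, d⟫ ≤ h z + t * (C * ‖d‖ ^ 2) := by
    intro t ht
    have hsplit : (1 / (1 + t)) • (x - t • d) + (t / (1 + t)) • z = x := by
      simp only [d]; match_scalars <;> field_simp <;> ring
    have hconv := hh.2 (Set.mem_univ (x - t • d)) (Set.mem_univ z)
      (by positivity : 0 ≤ 1 / (1 + t)) (by positivity : 0 ≤ t / (1 + t)) (by field_simp)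
    rw [hsplit, smul_eq_mul, smul_eq_mul] at hconv
    have hmaj' := hmaj (x - t • d)
    rw [sub_sub_cancel_left, inner_neg_right, real_inner_smul_right, norm_neg, norm_smul,
      Real.norm_of_nonneg ht.le] at hmaj'
    have hscaled : t * (h x + ⟪a, d⟫) ≤ t * (h z + t * (C * ‖d‖ ^ 2)) := by
      rw [div_mul_eq_mul_div, div_mul_eq_mul_div, ← add_div, le_div_iff₀ (by positivity)] at hconv
      nlinarith
    exact le_of_mul_le_mul_left hscaled ht
  have hlim : Tendsto (fun t : ℝ => h z + t * (C * ‖d‖ ^ 2)) (𝓝[>] 0) (𝓝 (h z)) := by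
    have h0 : Tendsto (fun t : ℝ => h z + t * (C * ‖d‖ ^ 2)) (𝓝 0)
        (𝓝 (h z + 0 * (C * ‖d‖ ^ 2))) :=
      tendsto_const_nhds.add (tendsto_id.mul_const _)
    simpa using h0.mono_left nhdsWithin_le_nhds
  exact ge_of_tendsto hlim (eventually_nhdsWithin_of_forall happrox)

lemma HasUpperCurvature.le_add_inner_add_sq {μ L : ℝ} {f : H → ℝ} (hf : HasUpperCurvature L f)
    {x u : H} (hu : IsSubgradient μ f x u) (z : H) :
    f z ≤ f x + ⟪u, z - x⟫ + L / 2 * ‖z - x‖ ^ 2 := by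
  have hsq (y : H) : ‖y‖ ^ 2 = ‖x‖ ^ 2 + 2 * ⟪x, y - x⟫ + ‖y - x‖ ^ 2 := by
    simpa using norm_add_sq_real x (y - x)
  have hmaj (y : H) : L / 2 * ‖y‖ ^ 2 - f y ≤ (L / 2 * ‖x‖ ^ 2 - f x) + ⟪L • x - u, y - x⟫
      + (L - μ) / 2 * ‖y - x‖ ^ 2 := by
    rw [inner_sub_left, real_inner_smul_left, hsq y]
    linarith [hu y]
  have key := ConvexOn.add_inner_le_of_le_add_inner_add_sq hf hmaj z
  rw [inner_sub_left, real_inner_smul_left, hsq z] at key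
  linarith

lemma dca_step_descent {mu1 mu2 L1 : ℝ} (hm : 0 ≤ mu1 + mu2)
    (hΔ : L1 * (mu1 + mu2) - mu1 * mu2 ≠ 0) {f1 f2 : H → ℝ} (hup : HasUpperCurvature L1 f1)
    {X Y u g : H} (hu : IsSubgradient mu1 f1 X u) (hgY : IsSubgradient mu1 f1 Y g)
    (hgX : IsSubgradient mu2 f2 X g) :
    (mu1 + mu2) / (L1 * (mu1 + mu2) - mu1 * mu2) / 2 * ‖u - g‖ ^ 2 ≤
      (f1 X - f2 X) - (f1 Y - f2 Y) := by
  generalize hΔdef : L1 * (mu1 + mu2) - mu1 * mu2 = Δ at hΔ ⊢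
  set a := (mu1 + mu2) / Δ
  set b := mu1 / Δ
  have hdiag : a / 2 = (L1 - mu1) / 2 * a ^ 2 + (mu1 + mu2) / 2 * b ^ 2 := by
    simp only [a, b]; field_simp; linear_combination -(mu1 + mu2) * hΔdef
  have hoff : a * mu1 = (mu1 + mu2) * b := by simp only [a, b]; ring
  clear_value a b
  obtain ⟨P, rfl⟩ : ∃ P, u = g + P := ⟨u - g, by abel⟩
  obtain ⟨D, rfl⟩ : ∃ D, Y = X + D := ⟨Y - X, by abel⟩
  have hA := hgY (X - a • P)
  have hB := hup.le_add_inner_add_sq hu (X - a • P)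
  have hC := hgX (X + D)
  have hsq : 0 ≤ ‖D + b • P‖ ^ 2 := by positivity
  rw [show X - a • P - (X + D) = -(a • P + D) by abel] at hA
  rw [show X - a • P - X = -(a • P) by abel] at hB
  simp only [add_sub_cancel_left, inner_neg_right, inner_add_right,
    inner_add_left, real_inner_smul_right, real_inner_smul_left, norm_neg, norm_add_sq_real,
    norm_smul, mul_pow, Real.norm_eq_abs, sq_abs, real_inner_self_eq_norm_sq] at hA hB hC hsq ⊢
  rw [real_inner_comm] at hsq
  linear_combination hA + hB + hC + (mu1 + mu2) / 2 * hsq - ‖P‖ ^ 2 * hdiag - ⟪P, D⟫ * hoff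

lemma mul_le_sub_of_forall_le_sub_succ {F : ℕ → ℝ} {c : ℝ} {N : ℕ}
    (h : ∀ k < N, c ≤ F k - F (k + 1)) : N * c ≤ F 0 - F N :=
  calc (N : ℝ) * c = ∑ _k ∈ Finset.range N, c := by simp
    _ ≤ ∑ k ∈ Finset.range N, (F k - F (k + 1)) :=
      Finset.sum_le_sum fun k hk => h k (Finset.mem_range.mp hk)
    _ = F 0 - F N := Finset.sum_range_sub' F N

lemma dca_rate_constant_eq {mu1 mu2 L1 : ℝ} (hmu1 : mu1 ≠ 0) (hmu2 : mu2 ≠ 0) (hL1 : L1 ≠ 0) :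
    (1 / L1) * (1 / mu1 + 1 / mu2) / (1 / mu1 + 1 / mu2 - 1 / L1) =
      (mu1 + mu2) / (L1 * (mu1 + mu2) - mu1 * mu2) := by
  rw [show 1 / mu1 + 1 / mu2 - 1 / L1 = (L1 * (mu1 + mu2) - mu1 * mu2) / (mu1 * mu2 * L1) by
    field_simp; ring]
  field_simp
  ring

theorem dca_rate_p3_one_nonsmooth_general
    (mu1 mu2 L1 : ℝ) (hL1 : 0 < L1) (h1 : -mu2 < mu1) (h2 : 0 < -mu2)
    (f1 f2 : H → ℝ)
    (h1up : HasUpperCurvature L1 f1)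
    (N : ℕ) (hN : 1 ≤ N) (x g1 g2 : ℕ → H)
    (hg1 : ∀ k ≤ N, IsSubgradient mu1 f1 (x k) (g1 k))
    (hg2 : ∀ k ≤ N, IsSubgradient mu2 f2 (x k) (g2 k))
    (hdca : ∀ k < N, g1 (k + 1) = g2 k) :
    ((1 : ℝ) / 2) * ((Finset.range (N + 1)).inf' (Finset.nonempty_range_iff.mpr (Nat.succ_ne_zero N))
        fun k => ‖g1 k - g2 k‖ ^ 2) ≤
      ((f1 (x 0) - f2 (x 0)) - (f1 (x N) - f2 (x N))) /
        ((1 / L1) * (1 / mu1 + 1 / mu2) / (1 / mu1 + 1 / mu2 - 1 / L1) * N) := by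
  have hm : 0 < mu1 + mu2 := by linarith
  have hΔ : 0 < L1 * (mu1 + mu2) - mu1 * mu2 := by nlinarith
  set M := (Finset.range (N + 1)).inf' _ fun k => ‖g1 k - g2 k‖ ^ 2
  have hstep (k : ℕ) (hk : k < N) : (mu1 + mu2) / (L1 * (mu1 + mu2) - mu1 * mu2) / 2 * M ≤
      (f1 (x k) - f2 (x k)) - (f1 (x (k + 1)) - f2 (x (k + 1))) := by
    have hM : M ≤ ‖g1 k - g2 k‖ ^ 2 := Finset.inf'_le _ (by simp only [Finset.mem_range]; omega)
    have hgx : IsSubgradient mu1 f1 (x (k + 1)) (g2 k) := hdca k hk ▸ hg1 (k + 1) hk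
    exact (mul_le_mul_of_nonneg_left hM (by positivity)).trans
      (dca_step_descent hm.le hΔ.ne' h1up (hg1 k hk.le) hgx (hg2 k hk.le))
  have hsum := mul_le_sub_of_forall_le_sub_succ (F := fun k => f1 (x k) - f2 (x k)) hstep
  have hNpos : (0 : ℝ) < N := by exact_mod_cast hN
  rw [dca_rate_constant_eq (by linarith) (by linarith) hL1.ne', le_div_iff₀ (by positivity)]
  linarith

/-- rate with one nonsmooth term, regime p3 with `L₂ = ∞`. -/
theorem dca_rate_p3_one_nonsmooth
    (mu1 mu2 L1 : ℝ) (hL1 : 0 < L1) (h1 : -mu2 < mu1) (h2 : 0 < -mu2)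
    (f1 f2 : H → ℝ)
    (h1lo : HasLowerCurvature mu1 f1) (h1up : HasUpperCurvature L1 f1)
    (h2lo : HasLowerCurvature mu2 f2)
    (N : ℕ) (hN : 1 ≤ N) (x g1 g2 : ℕ → H)
    (hg1 : ∀ k ≤ N, IsSubgradient mu1 f1 (x k) (g1 k))
    (hg2 : ∀ k ≤ N, IsSubgradient mu2 f2 (x k) (g2 k))
    (hdca : ∀ k < N, g1 (k + 1) = g2 k) :
    ((1 : ℝ) / 2) * ((Finset.range (N + 1)).inf' (Finset.nonempty_range_iff.mpr (Nat.succ_ne_zero N))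
        fun k => ‖g1 k - g2 k‖ ^ 2) ≤
      ((f1 (x 0) - f2 (x 0)) - (f1 (x N) - f2 (x N))) /
        ((1 / L1) * (1 / mu1 + 1 / mu2) / (1 / mu1 + 1 / mu2 - 1 / L1) * N) :=
  dca_rate_p3_one_nonsmooth_general mu1 mu2 L1 hL1 h1 h2 f1 f2 h1up N hN x g1 g2 hg1 hg2 hdca
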